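/- Let q ≥ 3. The numerical semigroup generated by q-1, q, and q+1 has genus ⌊(q-1)²/4⌋. -/

import Mathlib

/-- Membership in `⟨p+2, p+3, p+4⟩`: exactly the `n` lying in some interval
`[k*(p+2), k*(p+4)]`. -/
lemma stmt4_mem_iff (p n : ℕ) :
    n ∈ AddSubmonoid.closure ({p + 2, p + 3, p + 4} : Set ℕ)
      ↔ ∃ k, k * (p + 2) ≤ n ∧ n ≤ k * (p + 4) := by
  constructor
  · intro h
    induction h using AddSubmonoid.closure_induction with
    | mem x hx =>
      rcases hx with hx | hx | hx <;> subst hx <;> exact ⟨1, by omega, by omega⟩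
    | zero => exact ⟨0, by omega, by omega⟩
    | add x y _ _ ihx ihy =>
      obtain ⟨k, hk1, hk2⟩ := ihx
      obtain ⟨j, hj1, hj2⟩ := ihy
      refine ⟨k + j, ?_, ?_⟩
      · rw [add_mul]; exact Nat.add_le_add hk1 hj1
      · rw [add_mul]; exact Nat.add_le_add hk2 hj2
  · rintro ⟨k, h1, h2⟩
    have e : k * (p + 4) = k * (p + 2) + 2 * k := by ring
    set r := n - k * (p + 2) with hr
    have hrk : r ≤ 2 * k := by omega
    have hbc : r % 2 + r / 2 ≤ k := by omega
    have key : n = (k - r % 2 - r / 2) * (p + 2) + (r % 2) * (p + 3) + (r / 2) * (p + 4) := by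
      have h3 : (k - r % 2 - r / 2) + r % 2 + r / 2 = k := by omega
      have h4 : r % 2 + 2 * (r / 2) = r := by omega
      have h5 : n = ((k - r % 2 - r / 2) + r % 2 + r / 2) * (p + 2) + (r % 2 + 2 * (r / 2)) := by
        rw [h3, h4]; omega
      rw [h5]; ring
    rw [key]
    have m1 : (p + 2) ∈ AddSubmonoid.closure ({p + 2, p + 3, p + 4} : Set ℕ) :=
      AddSubmonoid.subset_closure (by simp)
    have m2 : (p + 3) ∈ AddSubmonoid.closure ({p + 2, p + 3, p + 4} : Set ℕ) :=
      AddSubmonoid.subset_closure (by simp)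
    have m3 : (p + 4) ∈ AddSubmonoid.closure ({p + 2, p + 3, p + 4} : Set ℕ) :=
      AddSubmonoid.subset_closure (by simp)
    refine add_mem (add_mem ?_ ?_) ?_
    · simpa using AddSubmonoid.nsmul_mem _ m1 (k - r % 2 - r / 2)
    · simpa using AddSubmonoid.nsmul_mem _ m2 (r % 2)
    · simpa using AddSubmonoid.nsmul_mem _ m3 (r / 2)

/-- The gaps are the open intervals between consecutive covered intervals. -/
lemma stmt4_gap_iff (p n : ℕ) :
    (¬ ∃ k, k * (p + 2) ≤ n ∧ n ≤ k * (p + 4))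
      ↔ ∃ k, k < p + 3 ∧ k * (p + 4) < n ∧ n < (k + 1) * (p + 2) := by
  constructor
  · intro h
    have hn : 0 < n := by
      by_contra h0
      exact h ⟨0, by omega, by omega⟩
    set k := Nat.findGreatest (fun j => j * (p + 4) < n) n with hk
    have hspec : k * (p + 4) < n :=
      Nat.findGreatest_spec (P := fun j => j * (p + 4) < n) (Nat.zero_le n) (by simpa using hn)
    have hkn : k < n := by
      have : k ≤ k * (p + 4) := Nat.le_mul_of_pos_right k (by omega)
      omega
    have hnext : ¬ ((k + 1) * (p + 4) < n) :=
      Nat.findGreatest_is_greatest (P := fun j => j * (p + 4) < n)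
        (hk ▸ Nat.lt_succ_self k) (by omega)
    have hup : ¬ ((k + 1) * (p + 2) ≤ n ∧ n ≤ (k + 1) * (p + 4)) := fun hc => h ⟨k + 1, hc⟩
    have h2 : n < (k + 1) * (p + 2) := by omega
    refine ⟨k, ?_, hspec, h2⟩
    have e1 : (k + 1) * (p + 2) = k * p + 2 * k + p + 2 := by ring
    have e2 : k * (p + 4) = k * p + 4 * k := by ring
    omega
  · rintro ⟨k, hk, h1, h2⟩ ⟨j, hj1, hj2⟩
    rcases le_or_gt j k with hle | hlt
    · have : j * (p + 4) ≤ k * (p + 4) := Nat.mul_le_mul_right _ hle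
      omega
    · have : (k + 1) * (p + 2) ≤ j * (p + 2) := Nat.mul_le_mul_right _ hlt
      omega

/-- Sum of the gap-interval lengths. -/
lemma stmt4_sum : ∀ p : ℕ, ∑ k ∈ Finset.range (p + 3), (p + 1 - 2 * k) = (p + 2) ^ 2 / 4
  | 0 => by decide
  | 1 => by decide
  | (p + 2) => by
    have ih := stmt4_sum p
    have step : ∑ k ∈ Finset.range (p + 5), (p + 3 - 2 * k)
        = (∑ k ∈ Finset.range (p + 3), (p + 1 - 2 * k)) + (p + 3) := by
      rw [Finset.sum_range_succ' (fun k => p + 3 - 2 * k) (p + 4)]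
      have : ∀ k, p + 3 - 2 * (k + 1) = p + 1 - 2 * k := by intro k; omega
      simp only [this]
      rw [Finset.sum_range_succ]
      omega
    have hdiv : (p + 4) ^ 2 / 4 = (p + 2) ^ 2 / 4 + (p + 3) := by
      have e : (p + 4) ^ 2 = (p + 2) ^ 2 + (p + 3) * 4 := by ring
      rw [e, Nat.add_mul_div_right _ _ (by norm_num)]
    have e5 : p + 2 + 3 = p + 5 := by ring
    rw [e5, step, ih, hdiv]

/-- The numerical semigroup `⟨q-1, q, q+1⟩`, for `q ≥ 3`, has genus `⌊(q-1)²/4⌋`. -/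
theorem stmt_4 (q : ℕ) (hq : 3 ≤ q) :
    {n : ℕ | n ∉ AddSubmonoid.closure ({q - 1, q, q + 1} : Set ℕ)}.ncard
      = (q - 1) ^ 2 / 4 := by
  obtain ⟨p, rfl⟩ : ∃ p, q = p + 3 := ⟨q - 3, by omega⟩
  have hgen : ({p + 3 - 1, p + 3, p + 3 + 1} : Set ℕ) = {p + 2, p + 3, p + 4} := by
    norm_num
  have hq1 : p + 3 - 1 = p + 2 := by omega
  rw [hgen, hq1]
  have hset : {n : ℕ | n ∉ AddSubmonoid.closure ({p + 2, p + 3, p + 4} : Set ℕ)}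
      = ↑((Finset.range (p + 3)).biUnion
          (fun k => Finset.Ioo (k * (p + 4)) ((k + 1) * (p + 2)))) := by
    ext n
    simp only [Set.mem_setOf_eq, Finset.coe_biUnion, Finset.coe_Ioo, Set.mem_iUnion,
      Set.mem_Ioo, Finset.mem_coe, Finset.mem_range]
    rw [stmt4_mem_iff, stmt4_gap_iff]
    constructor
    · rintro ⟨k, h1, h2, h3⟩; exact ⟨k, h1, h2, h3⟩
    · rintro ⟨k, h1, h2, h3⟩; exact ⟨k, h1, h2, h3⟩
  rw [hset, Set.ncard_coe_finset]
  rw [Finset.card_biUnion]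
  · have hterm : ∀ k, ((Finset.Ioo (k * (p + 4)) ((k + 1) * (p + 2))).card) = p + 1 - 2 * k := by
      intro k
      rw [Nat.card_Ioo]
      have e1 : (k + 1) * (p + 2) = k * p + 2 * k + p + 2 := by ring
      have e2 : k * (p + 4) = k * p + 4 * k := by ring
      omega
    simp only [hterm]
    exact stmt4_sum p
  · intro i _ j _ hij
    rw [Function.onFun, Finset.disjoint_left]
    intro a ha hb
    rw [Finset.mem_Ioo] at ha hb
    rcases lt_or_gt_of_ne hij with h | h
    · have : (i + 1) * (p + 2) ≤ j * (p + 2) := Nat.mul_le_mul_right _ h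
      have h2 : j * (p + 2) ≤ j * (p + 4) := Nat.mul_le_mul_left _ (by omega)
      omega
    · have : (j + 1) * (p + 2) ≤ i * (p + 2) := Nat.mul_le_mul_right _ h
      have h2 : i * (p + 2) ≤ i * (p + 4) := Nat.mul_le_mul_left _ (by omega)
      omega
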